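/- arXiv:1205.2940 — 2 statements merged into one kernel-verified Lean document; each statement's English description precedes it below -/
import Mathlib

section
/- With the operators of the type-B₂ positive representation for w₀ = s₁s₂s₁s₂ defined in the context, the following operator identities hold on the space of all functions ℂ⁴ → ℂ: e₁ ∘ f₂ = f₂ ∘ e₁, e₂ ∘ f₁ = f₁ ∘ e₂, e₁ ∘ f₁ − f₁ ∘ e₁ = (q_s − q_s⁻¹)·(K₁⁻¹ − K₁), and e₂ ∘ f₂ − f₂ ∘ e₂ = (q − q⁻¹)·(K₂⁻¹ − K₂). Equivalently, setting E_i = (2 sin(π b_i²))⁻¹ e_i and F_i = (2 sin(π b_i²))⁻¹ f_i with b₁ = b_s, b₂ = b, one has E_i F_j − F_j E_i = δ_ij (K_i − K_i⁻¹)/(q_i − q_i⁻¹) with q₁ = q_s, q₂ = q. -/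
noncomputable section

open Complex

/-- The space of operators on all functions `ℂ⁴ → ℂ`. -/
abbrev OpB : Type := Module.End ℂ ((Fin 4 → ℂ) → ℂ)

/-- Weyl operator `W(ℓ,δ)`: `(W(ℓ,δ) f)(x) = exp(ℓ(x + δ/2)) · f(x + δ)`. -/
def Wop (ℓ : (Fin 4 → ℂ) → ℂ) (δ : Fin 4 → ℂ) : OpB where
  toFun f := fun x => Complex.exp (ℓ (x + (2 : ℂ)⁻¹ • δ)) * f (x + δ)
  map_add' f g := by funext x; simp [mul_add]
  map_smul' c f := by funext x; simp [smul_eq_mul]; ring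

/-- `b_s = b/√2`. -/
def bs (b : ℝ) : ℝ := b / Real.sqrt 2

/-- `q = exp(π i b²)`. -/
def qq (b : ℝ) : ℂ := Complex.exp ((Real.pi : ℂ) * Complex.I * (b : ℂ) ^ 2)

/-- `q_s = exp(π i b_s²)`. -/
def qs (b : ℝ) : ℂ := Complex.exp ((Real.pi : ℂ) * Complex.I * ((bs b : ℝ) : ℂ) ^ 2)

/-- The affine functional `ℓ_α = π (b_s (ct·t + cv·v + cl1·λ₁) + b (cu·u + cw·w + cl2·λ₂))`,
where `(t,u,v,w) = (x 0, x 1, x 2, x 3)`. -/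
def ellB (b lam1 lam2 ct cu cv cw cl1 cl2 : ℝ) : (Fin 4 → ℂ) → ℂ := fun x =>
  (Real.pi : ℂ) * (((bs b : ℝ) : ℂ) * (ct * x 0 + cv * x 2 + cl1 * lam1)
    + (b : ℂ) * (cu * x 1 + cw * x 3 + cl2 * lam2))

/-- The shift vector `δ = (−i b_s d_t, −i b d_u, −i b_s d_v, −i b d_w)`. -/
def deltaB (b dt du dv dw : ℝ) : Fin 4 → ℂ :=
  ![-Complex.I * ((bs b : ℝ) : ℂ) * dt, -Complex.I * (b : ℂ) * du,
    -Complex.I * ((bs b : ℝ) : ℂ) * dv, -Complex.I * (b : ℂ) * dw]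

/-- The operator `[α]e(d_t p_t + d_u p_u + d_v p_v + d_w p_w) = W(ℓ_α,δ) + W(−ℓ_α,δ)`. -/
def brB (b lam1 lam2 ct cu cv cw cl1 cl2 dt du dv dw : ℝ) : OpB :=
  Wop (ellB b lam1 lam2 ct cu cv cw cl1 cl2) (deltaB b dt du dv dw)
    + Wop (fun x => -(ellB b lam1 lam2 ct cu cv cw cl1 cl2 x)) (deltaB b dt du dv dw)

/-- `K₁ = W(π(b_s(2λ₁−2t−2v) + b(u+w)), 0)`. -/
def K1 (b lam1 lam2 : ℝ) : OpB := Wop (ellB b lam1 lam2 (-2) 1 (-2) 1 2 0) 0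

/-- `K₁⁻¹`, the multiplication operator with negated exponent. -/
def K1inv (b lam1 lam2 : ℝ) : OpB := Wop (ellB b lam1 lam2 2 (-1) 2 (-1) (-2) 0) 0

/-- `K₂ = W(π(b(2λ₂−2u−2w) + b_s(2t+2v)), 0)`. -/
def K2 (b lam1 lam2 : ℝ) : OpB := Wop (ellB b lam1 lam2 2 (-2) 2 (-2) 0 2) 0

/-- `K₂⁻¹`, the multiplication operator with negated exponent. -/
def K2inv (b lam1 lam2 : ℝ) : OpB := Wop (ellB b lam1 lam2 (-2) 2 (-2) 2 0 (-2)) 0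

/-- `e₁ = [t]e(−p_t−p_u+p_w) + [u−v]e(−p_u−p_v+p_w) + [v−w]e(−p_v)`. -/
def e1 (b lam1 lam2 : ℝ) : OpB :=
  brB b lam1 lam2 1 0 0 0 0 0 (-1) (-1) 0 1
    + brB b lam1 lam2 0 1 (-1) 0 0 0 0 (-1) (-1) 1
    + brB b lam1 lam2 0 0 1 (-1) 0 0 0 0 (-1) 0

/-- `e₂ = [w]e(−p_w)`. -/
def e2 (b lam1 lam2 : ℝ) : OpB := brB b lam1 lam2 0 0 0 1 0 0 0 0 0 (-1)

/-- `f₁ = [2λ₁−t]e(p_t) + [2λ₁−2t+u−v]e(p_v)`. -/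
def f1 (b lam1 lam2 : ℝ) : OpB :=
  brB b lam1 lam2 (-1) 0 0 0 2 0 1 0 0 0
    + brB b lam1 lam2 (-2) 1 (-1) 0 2 0 0 0 1 0

/-- `f₂ = [2λ₂+2t−u]e(p_u) + [2λ₂+2t−2u+2v−w]e(p_w)`. -/
def f2 (b lam1 lam2 : ℝ) : OpB :=
  brB b lam1 lam2 2 (-1) 0 0 0 2 0 1 0 0
    + brB b lam1 lam2 2 (-2) 2 (-1) 0 2 0 0 0 1

/-- The B₂ Cartan matrix `a₁₁ = a₂₂ = 2, a₁₂ = −2, a₂₁ = −1`. -/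
def aB : Fin 2 → Fin 2 → ℤ := ![![2, -2], ![-1, 2]]

/-- `q₁ = q_s`, `q₂ = q`. -/
def qi (b : ℝ) : Fin 2 → ℂ := ![qs b, qq b]

/-- The pair of `e`-generators. -/
def eOp (b lam1 lam2 : ℝ) : Fin 2 → OpB := ![e1 b lam1 lam2, e2 b lam1 lam2]

/-- The pair of `f`-generators. -/
def fOp (b lam1 lam2 : ℝ) : Fin 2 → OpB := ![f1 b lam1 lam2, f2 b lam1 lam2]

/-- The pair of `K`-generators. -/
def KOp (b lam1 lam2 : ℝ) : Fin 2 → OpB := ![K1 b lam1 lam2, K2 b lam1 lam2]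

/-- The pair of inverse `K`-generators. -/
def KinvOp (b lam1 lam2 : ℝ) : Fin 2 → OpB := ![K1inv b lam1 lam2, K2inv b lam1 lam2]

/-- `b₁ = b_s`, `b₂ = b`. -/
def bi (b : ℝ) : Fin 2 → ℝ := ![bs b, b]

/-- `E_i = (2 sin(π b_i²))⁻¹ e_i`. -/
def EOp (b lam1 lam2 : ℝ) : Fin 2 → OpB := fun i =>
  (((2 * Real.sin (Real.pi * (bi b i) ^ 2) : ℝ) : ℂ))⁻¹ • eOp b lam1 lam2 i

/-- `F_i = (2 sin(π b_i²))⁻¹ f_i`. -/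
def FOp (b lam1 lam2 : ℝ) : Fin 2 → OpB := fun i =>
  (((2 * Real.sin (Real.pi * (bi b i) ^ 2) : ℝ) : ℂ))⁻¹ • fOp b lam1 lam2 i


/-! All operators involved are sums of Weyl operators `W(ℓ, δ)` with `ℓ` affine, and these
multiply like a quantum torus:
`W(ℓ₁, δ₁) W(ℓ₂, δ₂) = exp ((L₂ δ₁ - L₁ δ₂) / 2) W(ℓ₁ + ℓ₂, δ₁ + δ₂)`,
where `Lᵢ` is the linear part of `ℓᵢ`. For the functionals and shifts at hand the phase is
`π i b²` times a rational combination of the coefficients, so expanding `e_i f_j` and `f_j e_i`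
turns each relation into an identity between finitely many Weyl operators with scalar
coefficients: every term of nonzero total shift cancels, and the zero-shift terms assemble into
`K_i` and `K_i⁻¹`. The normalised form follows from `q_i - q_i⁻¹ = 2 i sin (π b_i²)`, which is
nonzero because `b_i²` is irrational. -/

lemma smul_mul_smul_sub_smul_mul_smul {R A : Type*} [CommRing R] [Ring A] [Module R A]
    [IsScalarTower R A A] [SMulCommClass R A A] (s t : R) (x y : A) :
    s • x * (t • y) - t • y * (s • x) = (s * t) • (x * y - y * x) := by
  rw [smul_mul_smul_comm, smul_mul_smul_comm, mul_comm t, smul_sub]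

lemma exp_mul_I_sub_inv (z : ℂ) : exp (z * I) - (exp (z * I))⁻¹ = 2 * sin z * I := by
  rw [← exp_neg, two_sin]
  ring_nf
  rw [I_sq]
  ring

lemma Irrational.sin_pi_mul_ne_zero {x : ℝ} (hx : Irrational x) : Real.sin (Real.pi * x) ≠ 0 := by
  rw [Ne, Real.sin_eq_zero_iff]
  rintro ⟨n, hn⟩
  exact hx.ne_int n (mul_right_cancel₀ Real.pi_ne_zero (by linarith))

theorem Wop_mul_Wop {ℓ₁ ℓ₂ L₁ L₂ : (Fin 4 → ℂ) → ℂ} (hL₁ : IsLinearMap ℂ L₁)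
    (hL₂ : IsLinearMap ℂ L₂) (hℓ₁ : ∀ x y, ℓ₁ (x + y) = ℓ₁ x + L₁ y)
    (hℓ₂ : ∀ x y, ℓ₂ (x + y) = ℓ₂ x + L₂ y) (δ₁ δ₂ : Fin 4 → ℂ) :
    Wop ℓ₁ δ₁ * Wop ℓ₂ δ₂ = exp ((L₂ δ₁ - L₁ δ₂) / 2) • Wop (ℓ₁ + ℓ₂) (δ₁ + δ₂) := by
  ext f x
  -- expand both exponents around the midpoint `x + (δ₁ + δ₂) / 2` of the total shift
  have h₁ : x + (2 : ℂ)⁻¹ • δ₁ = x + (2 : ℂ)⁻¹ • (δ₁ + δ₂) + (-2⁻¹ : ℂ) • δ₂ := by module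
  have h₂ : x + δ₁ + (2 : ℂ)⁻¹ • δ₂ = x + (2 : ℂ)⁻¹ • (δ₁ + δ₂) + (2 : ℂ)⁻¹ • δ₁ := by module
  simp only [Module.End.mul_apply, Wop, LinearMap.coe_mk, AddHom.coe_mk, LinearMap.smul_apply,
    Pi.smul_apply, Pi.add_apply, smul_eq_mul]
  rw [← add_assoc, ← mul_assoc, ← exp_add, ← mul_assoc, ← exp_add, h₁, h₂, hℓ₁, hℓ₂,
    hL₁.map_smul, hL₂.map_smul, smul_eq_mul, smul_eq_mul]
  ring_nf

lemma bs_sq (b : ℝ) : bs b ^ 2 = b ^ 2 / 2 := by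
  rw [bs, div_pow, Real.sq_sqrt zero_le_two]

lemma ofReal_bs_sq (b : ℝ) : ((bs b : ℝ) : ℂ) ^ 2 = (b : ℂ) ^ 2 / 2 := by
  exact_mod_cast bs_sq b

lemma ellB_apply_add (b lam1 lam2 ct cu cv cw cl1 cl2 : ℝ) (x y : Fin 4 → ℂ) :
    ellB b lam1 lam2 ct cu cv cw cl1 cl2 (x + y)
      = ellB b lam1 lam2 ct cu cv cw cl1 cl2 x + ellB b lam1 lam2 ct cu cv cw 0 0 y := by
  simp only [ellB, Pi.add_apply]; push_cast; ring

lemma isLinearMap_ellB (b lam1 lam2 ct cu cv cw : ℝ) :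
    IsLinearMap ℂ (ellB b lam1 lam2 ct cu cv cw 0 0) where
  map_add := ellB_apply_add b lam1 lam2 ct cu cv cw 0 0
  map_smul c x := by simp only [ellB, Pi.smul_apply, smul_eq_mul]; push_cast; ring

lemma ellB_add_ellB (b lam1 lam2 ct cu cv cw cl1 cl2 ct' cu' cv' cw' cl1' cl2' : ℝ) :
    ellB b lam1 lam2 ct cu cv cw cl1 cl2 + ellB b lam1 lam2 ct' cu' cv' cw' cl1' cl2'
      = ellB b lam1 lam2 (ct + ct') (cu + cu') (cv + cv') (cw + cw') (cl1 + cl1') (cl2 + cl2') := by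
  funext x; simp only [ellB, Pi.add_apply]; push_cast; ring

lemma neg_ellB (b lam1 lam2 ct cu cv cw cl1 cl2 : ℝ) :
    (fun x => -ellB b lam1 lam2 ct cu cv cw cl1 cl2 x)
      = ellB b lam1 lam2 (-ct) (-cu) (-cv) (-cw) (-cl1) (-cl2) := by
  funext x; simp only [ellB]; push_cast; ring

lemma deltaB_add_deltaB (b dt du dv dw dt' du' dv' dw' : ℝ) :
    deltaB b dt du dv dw + deltaB b dt' du' dv' dw'
      = deltaB b (dt + dt') (du + du') (dv + dv') (dw + dw') := by
  funext i; fin_cases i <;> simp [deltaB] <;> ring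

lemma deltaB_zero (b : ℝ) : deltaB b 0 0 0 0 = 0 := by
  funext i; fin_cases i <;> simp [deltaB]

lemma ellB_deltaB (b lam1 lam2 ct cu cv cw dt du dv dw : ℝ) :
    ellB b lam1 lam2 ct cu cv cw 0 0 (deltaB b dt du dv dw)
      = -(Real.pi * I * b ^ 2 * (((ct * dt + cv * dv) / 2 + cu * du + cw * dw : ℝ) : ℂ)) := by
  simp only [ellB, deltaB, Matrix.cons_val_zero, Matrix.cons_val_one, Matrix.cons_val_two,
    Matrix.cons_val_three, Matrix.head_cons, Matrix.tail_cons]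
  push_cast
  linear_combination (-(Real.pi : ℂ) * I * (ct * dt + cv * dv)) * ofReal_bs_sq b

theorem Wop_ellB_mul_Wop_ellB (b lam1 lam2 ct cu cv cw cl1 cl2 dt du dv dw
    ct' cu' cv' cw' cl1' cl2' dt' du' dv' dw' : ℝ) :
    Wop (ellB b lam1 lam2 ct cu cv cw cl1 cl2) (deltaB b dt du dv dw) *
      Wop (ellB b lam1 lam2 ct' cu' cv' cw' cl1' cl2') (deltaB b dt' du' dv' dw')
    = exp (Real.pi * I * b ^ 2 *
        ((((ct * dt' + cv * dv') / 2 + cu * du' + cw * dw')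
          - ((ct' * dt + cv' * dv) / 2 + cu' * du + cw' * dw)) / 2 : ℝ)) •
      Wop (ellB b lam1 lam2 (ct + ct') (cu + cu') (cv + cv') (cw + cw') (cl1 + cl1') (cl2 + cl2'))
        (deltaB b (dt + dt') (du + du') (dv + dv') (dw + dw')) := by
  rw [Wop_mul_Wop (isLinearMap_ellB ..) (isLinearMap_ellB ..)
    (ellB_apply_add b lam1 lam2 ct cu cv cw cl1 cl2)
    (ellB_apply_add b lam1 lam2 ct' cu' cv' cw' cl1' cl2'),
    ellB_deltaB, ellB_deltaB, ellB_add_ellB, deltaB_add_deltaB]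
  congr 2
  push_cast
  ring

lemma qs_eq_exp (b : ℝ) : qs b = exp (Real.pi * I * b ^ 2 * (1 / 2)) := by
  rw [qs, ofReal_bs_sq]; ring_nf

theorem e1_mul_f2_comm (b lam1 lam2 : ℝ) :
    e1 b lam1 lam2 * f2 b lam1 lam2 = f2 b lam1 lam2 * e1 b lam1 lam2 := by
  simp only [e1, f2, brB, neg_ellB, mul_add, add_mul, Wop_ellB_mul_Wop_ellB]
  norm_num
  module

theorem e2_mul_f1_comm (b lam1 lam2 : ℝ) :
    e2 b lam1 lam2 * f1 b lam1 lam2 = f1 b lam1 lam2 * e2 b lam1 lam2 := by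
  simp only [e2, f1, brB, neg_ellB, mul_add, add_mul, Wop_ellB_mul_Wop_ellB]
  norm_num
  abel

theorem e1_mul_f1_sub_f1_mul_e1 (b lam1 lam2 : ℝ) :
    e1 b lam1 lam2 * f1 b lam1 lam2 - f1 b lam1 lam2 * e1 b lam1 lam2
      = (qs b - (qs b)⁻¹) • (K1inv b lam1 lam2 - K1 b lam1 lam2) := by
  rw [K1, K1inv, ← deltaB_zero b]
  simp only [e1, f1, brB, neg_ellB, qs_eq_exp, ← exp_neg, mul_add, add_mul,
    Wop_ellB_mul_Wop_ellB]
  norm_num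
  module

theorem e2_mul_f2_sub_f2_mul_e2 (b lam1 lam2 : ℝ) :
    e2 b lam1 lam2 * f2 b lam1 lam2 - f2 b lam1 lam2 * e2 b lam1 lam2
      = (qq b - (qq b)⁻¹) • (K2inv b lam1 lam2 - K2 b lam1 lam2) := by
  rw [K2, K2inv, ← deltaB_zero b]
  simp only [e2, f2, brB, neg_ellB, qq, ← exp_neg, mul_add, add_mul, Wop_ellB_mul_Wop_ellB]
  norm_num
  module

theorem eOp_mul_fOp_sub_fOp_mul_eOp (b lam1 lam2 : ℝ) (i j : Fin 2) :
    eOp b lam1 lam2 i * fOp b lam1 lam2 j - fOp b lam1 lam2 j * eOp b lam1 lam2 i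
      = if i = j then (qi b i - (qi b i)⁻¹) • (KinvOp b lam1 lam2 i - KOp b lam1 lam2 i)
        else 0 := by
  fin_cases i <;> fin_cases j <;> simp [eOp, fOp, qi, KOp, KinvOp, e1_mul_f1_sub_f1_mul_e1,
    e2_mul_f2_sub_f2_mul_e2, e1_mul_f2_comm, e2_mul_f1_comm]

lemma qi_sub_inv (b : ℝ) (i : Fin 2) :
    qi b i - (qi b i)⁻¹ = ((2 * Real.sin (Real.pi * bi b i ^ 2) : ℝ) : ℂ) * I := by
  fin_cases i <;>
    simp only [qi, bi, qs, qq, Fin.zero_eta, Fin.mk_one, Matrix.cons_val_zero,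
      Matrix.cons_val_one] <;>
    push_cast <;> rw [← exp_mul_I_sub_inv] <;> ring_nf

lemma irrational_bi_sq {b : ℝ} (hirr : Irrational (b ^ 2)) (i : Fin 2) :
    Irrational (bi b i ^ 2) := by
  fin_cases i
  · simpa [bi, bs_sq] using hirr.div_natCast two_ne_zero
  · simpa [bi] using hirr

theorem B2_ef_relations_general (b lam1 lam2 : ℝ) (hirr : Irrational (b ^ 2)) :
    e1 b lam1 lam2 * f2 b lam1 lam2 = f2 b lam1 lam2 * e1 b lam1 lam2 ∧
    e2 b lam1 lam2 * f1 b lam1 lam2 = f1 b lam1 lam2 * e2 b lam1 lam2 ∧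
    e1 b lam1 lam2 * f1 b lam1 lam2 - f1 b lam1 lam2 * e1 b lam1 lam2
      = (qs b - (qs b)⁻¹) • (K1inv b lam1 lam2 - K1 b lam1 lam2) ∧
    e2 b lam1 lam2 * f2 b lam1 lam2 - f2 b lam1 lam2 * e2 b lam1 lam2
      = (qq b - (qq b)⁻¹) • (K2inv b lam1 lam2 - K2 b lam1 lam2) ∧
    ∀ i j : Fin 2,
      EOp b lam1 lam2 i * FOp b lam1 lam2 j - FOp b lam1 lam2 j * EOp b lam1 lam2 i
        = if i = j then
            ((qi b i - (qi b i)⁻¹)⁻¹) • (KOp b lam1 lam2 i - KinvOp b lam1 lam2 i)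
          else 0 := by
  refine ⟨e1_mul_f2_comm b lam1 lam2, e2_mul_f1_comm b lam1 lam2,
    e1_mul_f1_sub_f1_mul_e1 b lam1 lam2, e2_mul_f2_sub_f2_mul_e2 b lam1 lam2, fun i j => ?_⟩
  rw [EOp, FOp, smul_mul_smul_sub_smul_mul_smul (A := OpB), eOp_mul_fOp_sub_fOp_mul_eOp]
  split_ifs with hij
  · subst hij
    set S : ℂ := ((2 * Real.sin (Real.pi * bi b i ^ 2) : ℝ) : ℂ)
    have hS : S ≠ 0 := by
      simp only [S]
      exact_mod_cast mul_ne_zero two_ne_zero (irrational_bi_sq hirr i).sin_pi_mul_ne_zero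
    have hI := I_ne_zero
    have hscalar : S⁻¹ * S⁻¹ * (S * I) = -(S * I)⁻¹ := by
      field_simp
      linear_combination I_sq
    rw [qi_sub_inv, smul_smul, hscalar, ← neg_smul_neg, neg_neg, neg_sub]
  · exact smul_zero _

/-- the `[e_i, f_j]` relations for the type-B₂ positive representation
corresponding to `w₀ = s₁s₂s₁s₂`, together with the equivalent formulation
`E_i F_j − F_j E_i = δ_ij (K_i − K_i⁻¹)/(q_i − q_i⁻¹)`. -/
theorem B2_ef_relations (b lam1 lam2 : ℝ) (hb0 : 0 < b) (hb1 : b < 1)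
    (hirr : Irrational (b ^ 2)) :
    e1 b lam1 lam2 * f2 b lam1 lam2 = f2 b lam1 lam2 * e1 b lam1 lam2 ∧
    e2 b lam1 lam2 * f1 b lam1 lam2 = f1 b lam1 lam2 * e2 b lam1 lam2 ∧
    e1 b lam1 lam2 * f1 b lam1 lam2 - f1 b lam1 lam2 * e1 b lam1 lam2
      = (qs b - (qs b)⁻¹) • (K1inv b lam1 lam2 - K1 b lam1 lam2) ∧
    e2 b lam1 lam2 * f2 b lam1 lam2 - f2 b lam1 lam2 * e2 b lam1 lam2
      = (qq b - (qq b)⁻¹) • (K2inv b lam1 lam2 - K2 b lam1 lam2) ∧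
    ∀ i j : Fin 2,
      EOp b lam1 lam2 i * FOp b lam1 lam2 j - FOp b lam1 lam2 j * EOp b lam1 lam2 i
        = if i = j then
            ((qi b i - (qi b i)⁻¹)⁻¹) • (KOp b lam1 lam2 i - KinvOp b lam1 lam2 i)
          else 0 :=
  B2_ef_relations_general b lam1 lam2 hirr

end
end

section
/- Let ẽ₂ be the dual (tilde) operator and let e₁, e₂, f₁, f₂, K₁, K₂ be the operators of the type-B₂ positive representation for w₀ = s₁s₂s₁s₂, all defined in the context. Then the following operator identities hold on the space of all functions ℂ⁴ → ℂ: ẽ₂ ∘ e₂ = e₂ ∘ ẽ₂, ẽ₂ ∘ f₁ = f₁ ∘ ẽ₂, ẽ₂ ∘ f₂ = f₂ ∘ ẽ₂, ẽ₂ ∘ K₂ = K₂ ∘ ẽ₂, while ẽ₂ ∘ e₁ = − e₁ ∘ ẽ₂ and ẽ₂ ∘ K₁ = − K₁ ∘ ẽ₂. (The modular-double dual generator commutes with the original generators up to sign.) -/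
noncomputable section

open Complex

/-- The affine functional
`ℓ̃_α = π (b_s⁻¹ (ct·t + cv·v + cl1·λ₁) + b⁻¹ (cu·u + cw·w + cl2·λ₂))` (inverted weights). -/
def ellBs (b lam1 lam2 ct cu cv cw cl1 cl2 : ℝ) : (Fin 4 → ℂ) → ℂ := fun x =>
  (Real.pi : ℂ) * ((((bs b)⁻¹ : ℝ) : ℂ) * (ct * x 0 + cv * x 2 + cl1 * lam1)
    + ((b⁻¹ : ℝ) : ℂ) * (cu * x 1 + cw * x 3 + cl2 * lam2))

/-- The starred shift vector `δ̃ = (−i b_s⁻¹ d_t, −i b⁻¹ d_u, −i b_s⁻¹ d_v, −i b⁻¹ d_w)`. -/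
def deltaBs (b dt du dv dw : ℝ) : Fin 4 → ℂ :=
  ![-Complex.I * (((bs b)⁻¹ : ℝ) : ℂ) * dt, -Complex.I * ((b⁻¹ : ℝ) : ℂ) * du,
    -Complex.I * (((bs b)⁻¹ : ℝ) : ℂ) * dv, -Complex.I * ((b⁻¹ : ℝ) : ℂ) * dw]

/-- The starred operator `[α]_*e_*(·) = W(ℓ̃_α,δ̃) + W(−ℓ̃_α,δ̃)`. -/
def brBs (b lam1 lam2 ct cu cv cw cl1 cl2 dt du dv dw : ℝ) : OpB :=
  Wop (ellBs b lam1 lam2 ct cu cv cw cl1 cl2) (deltaBs b dt du dv dw)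
    + Wop (fun x => -(ellBs b lam1 lam2 ct cu cv cw cl1 cl2 x)) (deltaBs b dt du dv dw)

/-- `ẽ₂ = [w]_*e_*(−p_w)`. -/
def et2 (b lam1 lam2 : ℝ) : OpB := brBs b lam1 lam2 0 0 0 1 0 0 0 0 0 (-1)


lemma ellB_neg (b lam1 lam2 ct cu cv cw cl1 cl2 : ℝ) :
    (fun x => -(ellB b lam1 lam2 ct cu cv cw cl1 cl2 x))
      = ellB b lam1 lam2 (-ct) (-cu) (-cv) (-cw) (-cl1) (-cl2) := by
  funext x; simp only [ellB]; push_cast; ring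

lemma ellBs_neg (b lam1 lam2 ct cu cv cw cl1 cl2 : ℝ) :
    (fun x => -(ellBs b lam1 lam2 ct cu cv cw cl1 cl2 x))
      = ellBs b lam1 lam2 (-ct) (-cu) (-cv) (-cw) (-cl1) (-cl2) := by
  funext x; simp only [ellBs]; push_cast; ring

set_option maxHeartbeats 1000000 in
lemma key (b lam1 lam2 : ℝ) (hb : b ≠ 0) (ctw ct cu cv cw cl1 cl2 dt du dv dw : ℝ) :
    Wop (ellBs b lam1 lam2 0 0 0 ctw 0 0) (deltaBs b 0 0 0 (-1)) *
      Wop (ellB b lam1 lam2 ct cu cv cw cl1 cl2) (deltaB b dt du dv dw) =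
    Complex.exp ((Real.pi : ℂ) * Complex.I * (ctw * dw + cw)) •
      (Wop (ellB b lam1 lam2 ct cu cv cw cl1 cl2) (deltaB b dt du dv dw) *
        Wop (ellBs b lam1 lam2 0 0 0 ctw 0 0) (deltaBs b 0 0 0 (-1))) := by
  have hb' : (b : ℂ) ≠ 0 := by exact_mod_cast hb
  apply LinearMap.ext
  intro f
  funext x
  simp only [Module.End.mul_apply, LinearMap.smul_apply, Pi.smul_apply, Wop,
    LinearMap.coe_mk, AddHom.coe_mk, smul_eq_mul]
  rw [show x + deltaBs b 0 0 0 (-1) + deltaB b dt du dv dw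
      = x + deltaB b dt du dv dw + deltaBs b 0 0 0 (-1) by ring]
  have hrw : ∀ (C D E y : ℂ), Complex.exp C * (Complex.exp D * (Complex.exp E * y))
      = Complex.exp (C + D + E) * y := by
    intros C D E y; rw [Complex.exp_add, Complex.exp_add]; ring
  have hrw2 : ∀ (A B y : ℂ), Complex.exp A * (Complex.exp B * y) = Complex.exp (A + B) * y := by
    intros A B y; rw [Complex.exp_add]; ring
  rw [hrw, hrw2]
  have hrw3 : ∀ (A B y : ℂ), A = B → Complex.exp A * y = Complex.exp B * y := by
    intros A B y h; rw [h]
  apply hrw3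
  simp only [ellB, ellBs, deltaB, deltaBs, Pi.add_apply, Pi.smul_apply, smul_eq_mul,
    Matrix.cons_val_zero, Matrix.cons_val_one, Matrix.head_cons, Matrix.cons_val_two,
    Matrix.tail_cons, Matrix.cons_val_three, Matrix.head_fin_const]
  push_cast
  have h3 : (b : ℂ) * ((b : ℂ))⁻¹ = 1 := mul_inv_cancel₀ hb'
  linear_combination (Real.pi : ℂ) * Complex.I * ((cw : ℂ) + (ctw : ℂ) * (dw : ℂ)) * h3

lemma key_br (b lam1 lam2 : ℝ) (hb : b ≠ 0) (ct cu cv cw cl1 cl2 dt du dv dw : ℝ) (ε : ℂ)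
    (h1 : Complex.exp ((Real.pi : ℂ) * Complex.I * (((1:ℝ):ℂ) * ((dw:ℝ):ℂ) + ((cw:ℝ):ℂ))) = ε)
    (h2 : Complex.exp ((Real.pi : ℂ) * Complex.I * ((((-1:ℝ)):ℂ) * ((dw:ℝ):ℂ) + ((cw:ℝ):ℂ))) = ε)
    (h3 : Complex.exp ((Real.pi : ℂ) * Complex.I * (((1:ℝ):ℂ) * ((dw:ℝ):ℂ) + (((-cw:ℝ)):ℂ))) = ε)
    (h4 : Complex.exp ((Real.pi : ℂ) * Complex.I * ((((-1:ℝ)):ℂ) * ((dw:ℝ):ℂ) + (((-cw:ℝ)):ℂ))) = ε) :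
    et2 b lam1 lam2 * brB b lam1 lam2 ct cu cv cw cl1 cl2 dt du dv dw
      = ε • (brB b lam1 lam2 ct cu cv cw cl1 cl2 dt du dv dw * et2 b lam1 lam2) := by
  have ha := key b lam1 lam2 hb 1 ct cu cv cw cl1 cl2 dt du dv dw
  have hb1 := key b lam1 lam2 hb (-1) ct cu cv cw cl1 cl2 dt du dv dw
  have hc := key b lam1 lam2 hb 1 (-ct) (-cu) (-cv) (-cw) (-cl1) (-cl2) dt du dv dw
  have hd := key b lam1 lam2 hb (-1) (-ct) (-cu) (-cv) (-cw) (-cl1) (-cl2) dt du dv dw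
  rw [h1] at ha
  rw [h2] at hb1
  rw [h3] at hc
  rw [h4] at hd
  rw [et2, brBs, brB, ellBs_neg, ellB_neg]
  simp only [neg_zero]
  simp only [add_mul, mul_add, ha, hb1, hc, hd, smul_add]
  abel

lemma key_K (b lam1 lam2 : ℝ) (hb : b ≠ 0) (ct cu cv cw cl1 cl2 : ℝ) (ε : ℂ)
    (h1 : Complex.exp ((Real.pi : ℂ) * Complex.I * (((1:ℝ):ℂ) * ((0:ℝ):ℂ) + ((cw:ℝ):ℂ))) = ε)
    (h2 : Complex.exp ((Real.pi : ℂ) * Complex.I * ((((-1:ℝ)):ℂ) * ((0:ℝ):ℂ) + ((cw:ℝ):ℂ))) = ε) :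
    et2 b lam1 lam2 * Wop (ellB b lam1 lam2 ct cu cv cw cl1 cl2) 0
      = ε • (Wop (ellB b lam1 lam2 ct cu cv cw cl1 cl2) 0 * et2 b lam1 lam2) := by
  have ha := key b lam1 lam2 hb 1 ct cu cv cw cl1 cl2 0 0 0 0
  have hb1 := key b lam1 lam2 hb (-1) ct cu cv cw cl1 cl2 0 0 0 0
  rw [h1] at ha
  rw [h2] at hb1
  rw [← deltaB_zero b, et2, brBs, ellBs_neg]
  simp only [neg_zero]
  simp only [add_mul, mul_add, ha, hb1, smul_add]

lemma exp_pi_I_two : Complex.exp ((Real.pi : ℂ) * Complex.I * 2) = 1 := by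
  rw [show (Real.pi : ℂ) * Complex.I * 2 = 2 * (Real.pi : ℂ) * Complex.I by ring]
  exact Complex.exp_two_pi_mul_I

lemma exp_pi_I_neg_two : Complex.exp ((Real.pi : ℂ) * Complex.I * (-2)) = 1 := by
  rw [show (Real.pi : ℂ) * Complex.I * (-2) = -(2 * (Real.pi : ℂ) * Complex.I) by ring,
    Complex.exp_neg, Complex.exp_two_pi_mul_I, inv_one]

lemma exp_pi_I_one : Complex.exp ((Real.pi : ℂ) * Complex.I * 1) = -1 := by
  rw [mul_one]; exact Complex.exp_pi_mul_I

lemma exp_pi_I_neg_one : Complex.exp ((Real.pi : ℂ) * Complex.I * (-1)) = -1 := by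
  rw [show (Real.pi : ℂ) * Complex.I * (-1) = -((Real.pi : ℂ) * Complex.I) by ring,
    Complex.exp_neg, Complex.exp_pi_mul_I]
  norm_num

lemma exp_pi_I_neg_two' : Complex.exp (-((Real.pi : ℂ) * Complex.I * 2)) = 1 := by
  rw [Complex.exp_neg, exp_pi_I_two, inv_one]

lemma exp_pi_I' : Complex.exp ((Real.pi : ℂ) * Complex.I) = -1 := Complex.exp_pi_mul_I

lemma exp_pi_I_neg' : Complex.exp (-((Real.pi : ℂ) * Complex.I)) = -1 := by
  rw [Complex.exp_neg, Complex.exp_pi_mul_I]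
  norm_num

/-- the modular-double dual generator `ẽ₂` commutes with `e₂, f₁, f₂, K₂`
and anticommutes with `e₁, K₁` of the type-B₂ positive representation for
`w₀ = s₁s₂s₁s₂`. -/
theorem dual_commutation (b lam1 lam2 : ℝ) (hb0 : 0 < b) (hb1 : b < 1)
    (hirr : Irrational (b ^ 2)) :
    et2 b lam1 lam2 * e2 b lam1 lam2 = e2 b lam1 lam2 * et2 b lam1 lam2 ∧
    et2 b lam1 lam2 * f1 b lam1 lam2 = f1 b lam1 lam2 * et2 b lam1 lam2 ∧
    et2 b lam1 lam2 * f2 b lam1 lam2 = f2 b lam1 lam2 * et2 b lam1 lam2 ∧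
    et2 b lam1 lam2 * K2 b lam1 lam2 = K2 b lam1 lam2 * et2 b lam1 lam2 ∧
    et2 b lam1 lam2 * e1 b lam1 lam2 = -(e1 b lam1 lam2 * et2 b lam1 lam2) ∧
    et2 b lam1 lam2 * K1 b lam1 lam2 = -(K1 b lam1 lam2 * et2 b lam1 lam2) := by
  have hb : b ≠ 0 := ne_of_gt hb0
  have hK1 : et2 b lam1 lam2 * K1 b lam1 lam2 = -(K1 b lam1 lam2 * et2 b lam1 lam2) := by
    rw [K1, key_K b lam1 lam2 hb (-2) 1 (-2) 1 2 0 (-1)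
      (by push_cast; norm_num [exp_pi_I_one, exp_pi_I', exp_pi_I_neg'])
      (by push_cast; norm_num [exp_pi_I_one, exp_pi_I', exp_pi_I_neg'])]
    module
  have hK2 : et2 b lam1 lam2 * K2 b lam1 lam2 = K2 b lam1 lam2 * et2 b lam1 lam2 := by
    rw [K2, key_K b lam1 lam2 hb 2 (-2) 2 (-2) 0 2 1
      (by push_cast; norm_num [exp_pi_I_neg_two, exp_pi_I_neg_two'])
      (by push_cast; norm_num [exp_pi_I_neg_two, exp_pi_I_neg_two']), one_smul]
  have he2 : et2 b lam1 lam2 * e2 b lam1 lam2 = e2 b lam1 lam2 * et2 b lam1 lam2 := by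
    rw [e2, key_br b lam1 lam2 hb 0 0 0 1 0 0 0 0 0 (-1) 1
      (by push_cast; norm_num)
      (by push_cast; norm_num [exp_pi_I_two, exp_pi_I_neg_two'])
      (by push_cast; norm_num [exp_pi_I_neg_two, exp_pi_I_neg_two'])
      (by push_cast; norm_num), one_smul]
  have hf1 : et2 b lam1 lam2 * f1 b lam1 lam2 = f1 b lam1 lam2 * et2 b lam1 lam2 := by
    rw [f1, mul_add, add_mul,
      key_br b lam1 lam2 hb (-1) 0 0 0 2 0 1 0 0 0 1
        (by push_cast; norm_num) (by push_cast; norm_num)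
        (by push_cast; norm_num) (by push_cast; norm_num),
      key_br b lam1 lam2 hb (-2) 1 (-1) 0 2 0 0 0 1 0 1
        (by push_cast; norm_num) (by push_cast; norm_num)
        (by push_cast; norm_num) (by push_cast; norm_num), one_smul, one_smul]
  have hf2 : et2 b lam1 lam2 * f2 b lam1 lam2 = f2 b lam1 lam2 * et2 b lam1 lam2 := by
    rw [f2, mul_add, add_mul,
      key_br b lam1 lam2 hb 2 (-1) 0 0 0 2 0 1 0 0 1
        (by push_cast; norm_num) (by push_cast; norm_num)
        (by push_cast; norm_num) (by push_cast; norm_num),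
      key_br b lam1 lam2 hb 2 (-2) 2 (-1) 0 2 0 0 0 1 1
        (by push_cast; norm_num)
        (by push_cast; norm_num [exp_pi_I_neg_two, exp_pi_I_neg_two'])
        (by push_cast; norm_num [exp_pi_I_two, exp_pi_I_neg_two'])
        (by push_cast; norm_num), one_smul, one_smul]
  have he1 : et2 b lam1 lam2 * e1 b lam1 lam2 = -(e1 b lam1 lam2 * et2 b lam1 lam2) := by
    rw [e1, mul_add, add_mul, mul_add, add_mul,
      key_br b lam1 lam2 hb 1 0 0 0 0 0 (-1) (-1) 0 1 (-1)
        (by push_cast; norm_num [exp_pi_I_one, exp_pi_I', exp_pi_I_neg'])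
        (by push_cast; norm_num [exp_pi_I_neg_one, exp_pi_I', exp_pi_I_neg'])
        (by push_cast; norm_num [exp_pi_I_one, exp_pi_I', exp_pi_I_neg'])
        (by push_cast; norm_num [exp_pi_I_neg_one, exp_pi_I', exp_pi_I_neg']),
      key_br b lam1 lam2 hb 0 1 (-1) 0 0 0 0 (-1) (-1) 1 (-1)
        (by push_cast; norm_num [exp_pi_I_one, exp_pi_I', exp_pi_I_neg'])
        (by push_cast; norm_num [exp_pi_I_neg_one, exp_pi_I', exp_pi_I_neg'])
        (by push_cast; norm_num [exp_pi_I_one, exp_pi_I', exp_pi_I_neg'])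
        (by push_cast; norm_num [exp_pi_I_neg_one, exp_pi_I', exp_pi_I_neg']),
      key_br b lam1 lam2 hb 0 0 1 (-1) 0 0 0 0 (-1) 0 (-1)
        (by push_cast; norm_num [exp_pi_I_neg_one, exp_pi_I', exp_pi_I_neg'])
        (by push_cast; norm_num [exp_pi_I_neg_one, exp_pi_I', exp_pi_I_neg'])
        (by push_cast; norm_num [exp_pi_I_one, exp_pi_I', exp_pi_I_neg'])
        (by push_cast; norm_num [exp_pi_I_one, exp_pi_I', exp_pi_I_neg'])]
    module
  exact ⟨he2, hf1, hf2, hK2, he1, hK1⟩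


end
end
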